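/- arXiv:1308.4963 — 2 statements merged into one kernel-verified Lean document; each statement's English description precedes it below -/
import Mathlib

section
/- Let n ≥ 3 and κ be a real number with (2/n)√(n-1) ≤ κ ≤ 1. Define p = (n/2)κ - √(n²κ²/4 - (n-1)). Then p ≥ (1/κ)(1 + (1-κ²)/(n-2)) ≥ 1/κ. -/
/-!
Write `q = (1/κ)(1 + (1-κ²)/(n-2)) = (n-1-κ²)/(κ(n-2))`. The exponent `p` is the smaller root of
`f(x) = x² - nκx + (n-1)`, so `q ≤ p` as soon as `q` lies left of the vertex `nκ/2` and `f(q) ≥ 0`.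
The second condition is free: `f(q)` is the perfect square `((n-1)(1-κ²)/(κ(n-2)))²`. The first
follows from `n²κ² ≥ 4(n-1)` and `(n-2)² ≥ 0`. Finally `q ≥ 1/κ` because `κ² ≤ 1`.
-/

open Real

lemma le_sub_sqrt_of_le_of_quadratic_nonneg {a c x : ℝ} (hx : x ≤ a)
    (hf : 0 ≤ x ^ 2 - 2 * a * x + c) : x ≤ a - √(a ^ 2 - c) := by
  have hroot : √(a ^ 2 - c) ≤ a - x :=
    Real.sqrt_le_iff.mpr ⟨by linarith, by nlinarith⟩
  linarith

lemma four_mul_sub_one_le_sq_mul_sq {N κ : ℝ} (hN : 0 < N) (hκ : 2 / N * √(N - 1) ≤ κ) :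
    4 * (N - 1) ≤ N ^ 2 * κ ^ 2 := by
  by_cases h1 : N - 1 ≤ 0
  · nlinarith [sq_nonneg (N * κ)]
  have hNκ : 2 * √(N - 1) ≤ N * κ := by
    rwa [div_mul_eq_mul_div, div_le_iff₀ hN, mul_comm κ] at hκ
  calc 4 * (N - 1) = (2 * √(N - 1)) ^ 2 := by rw [mul_pow, Real.sq_sqrt (by linarith)]; ring
    _ ≤ (N * κ) ^ 2 := pow_le_pow_left₀ (by positivity) hNκ 2
    _ = N ^ 2 * κ ^ 2 := mul_pow N κ 2

section

variable {N κ : ℝ}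

lemma quadratic_at_lower_bound (hκ : κ ≠ 0) (hN : N - 2 ≠ 0) :
    (1 / κ * (1 + (1 - κ ^ 2) / (N - 2))) ^ 2
        - 2 * (N / 2 * κ) * (1 / κ * (1 + (1 - κ ^ 2) / (N - 2))) + (N - 1)
      = ((N - 1) * (1 - κ ^ 2) / (κ * (N - 2))) ^ 2 := by
  field_simp
  ring

lemma lower_bound_le_half_mul (hκ : 0 < κ) (hN : 2 < N) (hdisc : 4 * (N - 1) ≤ N ^ 2 * κ ^ 2) :
    1 / κ * (1 + (1 - κ ^ 2) / (N - 2)) ≤ N / 2 * κ := by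
  have hN2 : 0 < N - 2 := by linarith
  have hq : 1 / κ * (1 + (1 - κ ^ 2) / (N - 2)) = (N - 1 - κ ^ 2) / (κ * (N - 2)) := by
    field_simp
    ring
  rw [hq, div_le_iff₀ (by positivity)]
  nlinarith [sq_nonneg (N - 2), mul_nonneg (sq_nonneg (N - 2)) (sq_nonneg κ)]

lemma inv_le_lower_bound (hκ : 0 < κ) (hκ1 : κ ≤ 1) (hN : 2 < N) :
    1 / κ ≤ 1 / κ * (1 + (1 - κ ^ 2) / (N - 2)) := by
  have hκ2 : κ ^ 2 ≤ 1 := pow_le_one₀ hκ.le hκ1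
  refine le_mul_of_one_le_right (by positivity) ?_
  have : 0 ≤ (1 - κ ^ 2) / (N - 2) := div_nonneg (by linarith) (by linarith)
  linarith

end

theorem p_lower_bounds (n : ℕ) (hn : 3 ≤ n) (κ : ℝ)
    (hκl : 2 / (n : ℝ) * Real.sqrt ((n : ℝ) - 1) ≤ κ) (hκu : κ ≤ 1) :
    let p : ℝ := (n : ℝ) / 2 * κ - Real.sqrt ((n : ℝ) ^ 2 * κ ^ 2 / 4 - ((n : ℝ) - 1))
    (1 / κ) * (1 + (1 - κ ^ 2) / ((n : ℝ) - 2)) ≤ p ∧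
      1 / κ ≤ (1 / κ) * (1 + (1 - κ ^ 2) / ((n : ℝ) - 2)) := by
  intro p
  have hN : (2 : ℝ) < n := by exact_mod_cast hn
  have hκ : 0 < κ :=
    lt_of_lt_of_le (mul_pos (by positivity) (Real.sqrt_pos.mpr (by linarith))) hκl
  have hdisc := four_mul_sub_one_le_sq_mul_sq (by linarith) hκl
  have hf := quadratic_at_lower_bound (N := n) hκ.ne' (by linarith)
  have hp : p = (n : ℝ) / 2 * κ - √(((n : ℝ) / 2 * κ) ^ 2 - ((n : ℝ) - 1)) := by
    simp only [p]
    ring_nf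
  refine ⟨?_, inv_le_lower_bound hκ hκu hN⟩
  rw [hp]
  exact le_sub_sqrt_of_le_of_quadratic_nonneg (lower_bound_le_half_mul hκ hN hdisc)
    (hf ▸ sq_nonneg _)
end

section
/- Let (ℝⁿ, σ̃) be the rotationally symmetric metric dρ² + λ̃²(ρ)dθ² with λ̃ as above. Then all sectional curvatures are strictly positive: K(∂ρ, e_α) = -λ̃''/λ̃ > 0 and K(e_α, e_β) = (1 - (λ̃')²)/λ̃² > 0 for ρ > 0, and lim_{s→0} (1-(λ̃')²(s))/λ̃²(s) = 4(1-κ²)/(π²κ²) > 0. -/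
/-!
The warping function `λ̃` inverts the primitive of `g r = √(1 + a arctan² r)`, so
`λ̃' = 1 / g(λ̃)` and `λ̃'' = -g'(λ̃) / g(λ̃)³`. As `g` increases on `(0, ∞)`, the radial curvature
`-λ̃''/λ̃` is positive; as `g² - 1 = a arctan²`, the spherical curvature equals
`a (arctan λ̃ / λ̃)² / g(λ̃)²`, which is positive and tends to `a` as `λ̃ → 0⁺`.
-/

open Real Filter Set Topology

section PrimitiveInverse

variable {g lam : ℝ → ℝ} {c s : ℝ}

theorem exists_orderIso_integral (hg : Continuous g) (hc : 0 < c) (hgc : ∀ r, c ≤ g r) :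
    ∃ e : ℝ ≃o ℝ, ∀ t, e t = ∫ r in (0 : ℝ)..t, g r := by
  set F : ℝ → ℝ := fun t => ∫ r in (0 : ℝ)..t, g r
  have hF : ∀ t, HasDerivAt F (g t) t := fun t => (hg.integral_hasStrictDerivAt 0 t).hasDerivAt
  have hFdiff : Differentiable ℝ F := fun t => (hF t).differentiableAt
  have hmono : StrictMono F :=
    strictMono_of_deriv_pos fun t => (hF t).deriv ▸ hc.trans_le (hgc t)
  have hgrowth : ∀ ⦃x y⦄, x ≤ y → c * (y - x) ≤ F y - F x :=
    mul_sub_le_image_sub_of_le_deriv hFdiff fun t => (hF t).deriv ▸ hgc t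
  have hsurj : Function.Surjective F := by
    refine hFdiff.continuous.surjective ?_ ?_
    · refine tendsto_atTop_mono' _ ((eventually_ge_atTop 0).mono fun t ht => ?_)
        (tendsto_atTop_add_const_left _ (F 0) (tendsto_id.const_mul_atTop hc))
      change F 0 + c * t ≤ F t
      linarith [hgrowth ht]
    · refine tendsto_atBot_mono' _ ((eventually_le_atBot 0).mono fun t ht => ?_)
        (tendsto_atBot_add_const_left _ (F 0) (tendsto_id.const_mul_atBot hc))
      change F t ≤ F 0 + c * t
      linarith [hgrowth ht]
  exact ⟨hmono.orderIsoOfSurjective F hsurj, fun _ => rfl⟩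

def IsPrimitiveInverse (g lam : ℝ → ℝ) : Prop :=
  ∀ s, 0 ≤ s → ∫ r in (0 : ℝ)..lam s, g r = s

namespace IsPrimitiveInverse

theorem eqOn_symm (h : IsPrimitiveInverse g lam) {e : ℝ ≃o ℝ}
    (he : ∀ t, e t = ∫ r in (0 : ℝ)..t, g r) : EqOn lam e.symm (Ici 0) :=
  fun s hs => (e.symm_apply_eq.2 (by rw [he, h s hs])).symm

theorem continuousOn (h : IsPrimitiveInverse g lam) (hg : Continuous g) (hc : 0 < c)
    (hgc : ∀ r, c ≤ g r) : ContinuousOn lam (Ici 0) := by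
  obtain ⟨e, he⟩ := exists_orderIso_integral hg hc hgc
  exact e.symm.continuous.continuousOn.congr (h.eqOn_symm he)

theorem map_zero (h : IsPrimitiveInverse g lam) (hg : Continuous g) (hc : 0 < c)
    (hgc : ∀ r, c ≤ g r) : lam 0 = 0 := by
  obtain ⟨e, he⟩ := exists_orderIso_integral hg hc hgc
  exact e.injective (by rw [he, he, h 0 le_rfl, intervalIntegral.integral_same])

theorem pos (h : IsPrimitiveInverse g lam) (hg : Continuous g) (hc : 0 < c)
    (hgc : ∀ r, c ≤ g r) (hs : 0 < s) : 0 < lam s := by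
  obtain ⟨e, he⟩ := exists_orderIso_integral hg hc hgc
  exact e.lt_iff_lt.1 (by rwa [he, he, h s hs.le, intervalIntegral.integral_same])

theorem tendsto_nhdsGT (h : IsPrimitiveInverse g lam) (hg : Continuous g) (hc : 0 < c)
    (hgc : ∀ r, c ≤ g r) : Tendsto lam (𝓝[>] 0) (𝓝[>] 0) := by
  refine tendsto_nhdsWithin_of_tendsto_nhds_of_eventually_within _ ?_
    (eventually_nhdsWithin_of_forall fun s hs => h.pos hg hc hgc hs)
  have hcont := (h.continuousOn hg hc hgc 0 self_mem_Ici).tendsto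
  rw [h.map_zero hg hc hgc] at hcont
  exact hcont.mono_left (nhdsWithin_mono _ Ioi_subset_Ici_self)

theorem hasDerivAt (h : IsPrimitiveInverse g lam) (hg : Continuous g) (hc : 0 < c)
    (hgc : ∀ r, c ≤ g r) (hs : 0 < s) : HasDerivAt lam (g (lam s))⁻¹ s :=
  HasDerivAt.of_local_left_inverse ((h.continuousOn hg hc hgc).continuousAt (Ici_mem_nhds hs))
    (hg.integral_hasStrictDerivAt 0 _).hasDerivAt (hc.trans_le (hgc _)).ne'
    ((eventually_gt_nhds hs).mono fun _ hy => h _ hy.le)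

theorem deriv_deriv (h : IsPrimitiveInverse g lam) (hg : Continuous g) (hc : 0 < c)
    (hgc : ∀ r, c ≤ g r) (hs : 0 < s) {g' : ℝ} (hg' : HasDerivAt g g' (lam s)) :
    deriv (deriv lam) s = -(g' / g (lam s) ^ 3) := by
  have hne : g (lam s) ≠ 0 := (hc.trans_le (hgc _)).ne'
  have hderiv : deriv lam =ᶠ[𝓝 s] fun y => (g (lam y))⁻¹ :=
    (eventually_gt_nhds hs).mono fun _ hy => (h.hasDerivAt hg hc hgc hy).deriv
  have hinv : HasDerivAt (fun y => (g (lam y))⁻¹) (-(g' * (g (lam s))⁻¹) / g (lam s) ^ 2) s :=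
    (hg'.comp s (h.hasDerivAt hg hc hgc hs)).inv hne
  rw [hderiv.deriv_eq, hinv.deriv]
  field_simp

theorem one_sub_deriv_sq_div_sq (h : IsPrimitiveInverse g lam) (hg : Continuous g)
    (hc : 0 < c) (hgc : ∀ r, c ≤ g r) (hs : 0 < s) :
    (1 - deriv lam s ^ 2) / lam s ^ 2 = (g (lam s) ^ 2 - 1) / lam s ^ 2 / g (lam s) ^ 2 := by
  have hne : g (lam s) ≠ 0 := (hc.trans_le (hgc _)).ne'
  rw [(h.hasDerivAt hg hc hgc hs).deriv]
  field_simp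

theorem tendsto_one_sub_deriv_sq_div_sq (h : IsPrimitiveInverse g lam) (hg : Continuous g)
    (hc : 0 < c) (hgc : ∀ r, c ≤ g r) {L : ℝ}
    (hL : Tendsto (fun t => (g t ^ 2 - 1) / t ^ 2) (𝓝[>] 0) (𝓝 L)) :
    Tendsto (fun s => (1 - deriv lam s ^ 2) / lam s ^ 2) (𝓝[>] 0) (𝓝 (L / g 0 ^ 2)) := by
  have hlam := h.tendsto_nhdsGT hg hc hgc
  have hg0 : g 0 ^ 2 ≠ 0 := pow_ne_zero 2 (hc.trans_le (hgc 0)).ne'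
  refine Tendsto.congr' (eventually_nhdsWithin_of_forall fun s hs =>
    (h.one_sub_deriv_sq_div_sq hg hc hgc hs).symm) ?_
  exact (hL.comp hlam).div
    (((hg.tendsto 0).comp (tendsto_nhds_of_tendsto_nhdsWithin hlam)).pow 2) hg0

end IsPrimitiveInverse

end PrimitiveInverse

/-- The derivative `(λ̃⁻¹)'` of the inverse of the warping function. -/
noncomputable def warpingInvDeriv (a r : ℝ) : ℝ := √(1 + a * arctan r ^ 2)

section WarpingInvDeriv

variable {a : ℝ}

theorem continuous_warpingInvDeriv (a : ℝ) : Continuous (warpingInvDeriv a) := by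
  unfold warpingInvDeriv
  fun_prop

theorem warpingInvDeriv_zero (a : ℝ) : warpingInvDeriv a 0 = 1 := by
  simp [warpingInvDeriv]

theorem warpingInvDeriv_sq (ha : 0 ≤ a) (r : ℝ) :
    warpingInvDeriv a r ^ 2 = 1 + a * arctan r ^ 2 :=
  sq_sqrt (by positivity)

theorem one_le_warpingInvDeriv (ha : 0 ≤ a) (r : ℝ) : 1 ≤ warpingInvDeriv a r :=
  one_le_sqrt.2 (le_add_of_nonneg_right (by positivity))

theorem hasDerivAt_warpingInvDeriv (ha : 0 ≤ a) (r : ℝ) :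
    HasDerivAt (warpingInvDeriv a) (a * arctan r / ((1 + r ^ 2) * warpingInvDeriv a r)) r := by
  have hsq : HasDerivAt (fun r => 1 + a * arctan r ^ 2)
      (a * (2 * arctan r ^ 1 * (1 / (1 + r ^ 2)))) r :=
    (((hasDerivAt_arctan r).pow 2).const_mul a).const_add 1
  refine (hsq.sqrt (by positivity)).congr_deriv ?_
  unfold warpingInvDeriv
  field_simp

theorem tendsto_warpingInvDeriv_sq_sub_one_div_sq (ha : 0 ≤ a) :
    Tendsto (fun t => (warpingInvDeriv a t ^ 2 - 1) / t ^ 2) (𝓝[>] 0) (𝓝 a) := by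
  have hslope : Tendsto (fun t => t⁻¹ • (arctan (0 + t) - arctan 0)) (𝓝[>] 0) (𝓝 1) := by
    simpa using (hasDerivAt_arctan 0).tendsto_slope_zero_right
  convert (hslope.pow 2).const_mul a using 1
  · ext t
    simp only [warpingInvDeriv_sq ha, zero_add, arctan_zero, sub_zero, smul_eq_mul]
    ring
  · simp

end WarpingInvDeriv

theorem positive_sectional_curvature_general (κ : ℝ) (h0 : 0 < κ) (h1 : κ < 1)
    (lam : ℝ → ℝ) (a : ℝ) (ha : a = 4 * (1 - κ ^ 2) / (Real.pi ^ 2 * κ ^ 2))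
    (hinv : ∀ s : ℝ, 0 ≤ s →
      (∫ r in (0 : ℝ)..(lam s), Real.sqrt (1 + a * Real.arctan r ^ 2)) = s) :
    (∀ s : ℝ, 0 < s →
        0 < -(deriv (deriv lam) s) / lam s ∧
          0 < (1 - (deriv lam s) ^ 2) / (lam s) ^ 2) ∧
      Filter.Tendsto (fun s => (1 - (deriv lam s) ^ 2) / (lam s) ^ 2)
        (nhdsWithin 0 (Set.Ioi 0)) (nhds a) ∧
      0 < a := by
  have ha_pos : 0 < a := by
    rw [ha]
    have : 0 < 1 - κ ^ 2 := by nlinarith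
    positivity
  have hg := continuous_warpingInvDeriv a
  have hg1 := one_le_warpingInvDeriv ha_pos.le
  have hlam : IsPrimitiveInverse (warpingInvDeriv a) lam := hinv
  refine ⟨fun s hs => ⟨?radial, ?spherical⟩, ?limit, ha_pos⟩
  case radial =>
    have hpos := hlam.pos hg one_pos hg1 hs
    rw [hlam.deriv_deriv hg one_pos hg1 hs (hasDerivAt_warpingInvDeriv ha_pos.le _), neg_neg]
    have := arctan_pos.2 hpos
    have := zero_lt_one.trans_le (hg1 (lam s))
    positivity
  case spherical =>
    have hpos := hlam.pos hg one_pos hg1 hs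
    rw [hlam.one_sub_deriv_sq_div_sq hg one_pos hg1 hs, warpingInvDeriv_sq ha_pos.le,
      add_sub_cancel_left]
    have := arctan_pos.2 hpos
    positivity
  case limit =>
    simpa [warpingInvDeriv_zero] using
      hlam.tendsto_one_sub_deriv_sq_div_sq hg one_pos hg1
        (tendsto_warpingInvDeriv_sq_sub_one_div_sq ha_pos.le)

theorem positive_sectional_curvature (κ : ℝ) (h0 : 0 < κ) (h1 : κ < 1)
    (lam : ℝ → ℝ) (a : ℝ) (ha : a = 4 * (1 - κ ^ 2) / (Real.pi ^ 2 * κ ^ 2))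
    (hlam0 : ∀ s : ℝ, 0 ≤ s → 0 ≤ lam s)
    (hinv : ∀ s : ℝ, 0 ≤ s →
      (∫ r in (0 : ℝ)..(lam s), Real.sqrt (1 + a * Real.arctan r ^ 2)) = s) :
    (∀ s : ℝ, 0 < s →
        0 < -(deriv (deriv lam) s) / lam s ∧
          0 < (1 - (deriv lam s) ^ 2) / (lam s) ^ 2) ∧
      Filter.Tendsto (fun s => (1 - (deriv lam s) ^ 2) / (lam s) ^ 2)
        (nhdsWithin 0 (Set.Ioi 0)) (nhds a) ∧
      0 < a :=
  positive_sectional_curvature_general κ h0 h1 lam a ha hinv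
end
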